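/- arXiv:2503.22601 — 6 statements merged into one kernel-verified Lean document; each statement's English description precedes it below -/
import Mathlib

section
/- Let Υ be a causal operator mapping ℝ^d-valued signals to ℝ^d-valued signals such that the operator Υ° := Υ − I is strictly causal, where I is the identity operator. Then there exists a unique operator Ψ mapping ℝ^d-valued signals to ℝ^d-valued signals such that Υ(Ψ(a)) = a and Ψ(Υ(b)) = b for all signals a, b; moreover Ψ is causal, and for every signal a the sequence b := Ψ(a) is the unique signal satisfying b_t = a_t − Υ°(b)_t for all t ∈ ℕ. -/
/-- A signal in `ℝ^d` is a function `ℕ → ℝ^d`. -/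
abbrev Signal (d : ℕ) := ℕ → EuclideanSpace ℝ (Fin d)

/-- An operator is causal if its output at time `t` depends only on inputs up to time `t`. -/
def Causal {d₁ d₂ : ℕ} (Υ : Signal d₁ → Signal d₂) : Prop :=
  ∀ (x z : Signal d₁) (t : ℕ), (∀ s ≤ t, x s = z s) → Υ x t = Υ z t

/-- An operator is strictly causal if its output at time `t` depends only on inputs
up to time `t - 1`. -/
def StrictlyCausal {d₁ d₂ : ℕ} (Υ : Signal d₁ → Signal d₂) : Prop :=
  ∀ (x z : Signal d₁) (t : ℕ), (∀ s < t, x s = z s) → Υ x t = Υ z t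

/-! A strictly causal operator `F` has exactly one fixed point: its value at time `t` is already
determined by `F^[t + 1]` applied to any signal, since after `n` applications of `F` the first `n`
values no longer depend on the starting signal. Inverting `Υ = I + Υ°` at `a` amounts to finding
the fixed point of the strictly causal operator `b ↦ a - Υ°(b)`. -/

theorem eq_sub_sub_self_iff {G : Type*} [AddCommGroup G] {a p q : G} :
    p = a - (q - p) ↔ q = a := by
  rw [show a - (q - p) = p + (a - q) by abel, left_eq_add, sub_eq_zero, eq_comm]

def causalFixedPoint {d : ℕ} (F : Signal d → Signal d) : Signal d :=
  fun t => F^[t + 1] 0 t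

namespace StrictlyCausal

variable {d : ℕ} {F : Signal d → Signal d}

theorem iterate_apply_eq (hF : StrictlyCausal F) (x y : Signal d) :
    ∀ {n s : ℕ}, s < n → F^[n] x s = F^[n] y s
  | n + 1, s, hs => by
    rw [Function.iterate_succ_apply', Function.iterate_succ_apply']
    exact hF _ _ s fun r hr => iterate_apply_eq hF x y (by omega)

theorem causalFixedPoint_apply_eq_iterate (hF : StrictlyCausal F) {n s : ℕ} (hs : s < n) :
    causalFixedPoint F s = F^[n] 0 s := by
  obtain ⟨k, rfl⟩ := Nat.exists_eq_add_of_le (Nat.succ_le_of_lt hs)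
  rw [Function.iterate_add_apply]
  exact hF.iterate_apply_eq _ _ s.lt_succ_self

theorem apply_causalFixedPoint (hF : StrictlyCausal F) :
    F (causalFixedPoint F) = causalFixedPoint F := by
  funext t
  calc F (causalFixedPoint F) t = F (F^[t] 0) t :=
        hF _ _ t fun s hs => hF.causalFixedPoint_apply_eq_iterate hs
    _ = causalFixedPoint F t := by rw [causalFixedPoint, Function.iterate_succ_apply']

theorem eq_causalFixedPoint (hF : StrictlyCausal F) {b : Signal d} (hb : F b = b) :
    b = causalFixedPoint F := by
  funext t
  calc b t = F^[t + 1] b t := by rw [(Function.IsFixedPt.iterate hb (t + 1)).eq]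
    _ = causalFixedPoint F t := hF.iterate_apply_eq _ _ t.lt_succ_self

theorem const_sub (hF : StrictlyCausal F) (a : Signal d) : StrictlyCausal fun b => a - F b :=
  fun x z t h => by simp only [Pi.sub_apply, hF x z t h]

theorem causal_causalFixedPoint_const_sub (hF : StrictlyCausal F) :
    Causal fun a => causalFixedPoint fun b => a - F b := by
  intro a a' t hagree
  induction t using Nat.strong_induction_on with
  | _ t ih =>
    have hpast : ∀ s < t, causalFixedPoint (fun b => a - F b) s
        = causalFixedPoint (fun b => a' - F b) s :=
      fun s hs => ih s hs fun r hr => hagree r (hr.trans hs.le)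
    change causalFixedPoint _ t = causalFixedPoint _ t
    rw [← (hF.const_sub a).apply_causalFixedPoint, ← (hF.const_sub a').apply_causalFixedPoint]
    simp only [Pi.sub_apply, hagree t le_rfl, hF _ _ t hpast]

end StrictlyCausal

theorem exists_unique_causal_inverse_general {d : ℕ} (Υ : Signal d → Signal d)
    (hΥo : StrictlyCausal (fun x => Υ x - x)) :
    ∃ Ψ : Signal d → Signal d,
      (∀ a, Υ (Ψ a) = a) ∧ (∀ b, Ψ (Υ b) = b) ∧
      (∀ Ψ' : Signal d → Signal d,
        ((∀ a, Υ (Ψ' a) = a) ∧ (∀ b, Ψ' (Υ b) = b)) → Ψ' = Ψ) ∧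
      Causal Ψ ∧
      (∀ a : Signal d,
        (∀ t, Ψ a t = a t - (Υ (Ψ a) t - Ψ a t)) ∧
        (∀ b : Signal d, (∀ t, b t = a t - (Υ b t - b t)) → b = Ψ a)) := by
  set Ψ := fun a => causalFixedPoint fun b => a - (Υ b - b)
  have hfix (a : Signal d) : ∀ t, Ψ a t = a t - (Υ (Ψ a) t - Ψ a t) := fun t =>
    (congrFun ((hΥo.const_sub a).apply_causalFixedPoint) t).symm
  have hunique (a b : Signal d) (hb : ∀ t, b t = a t - (Υ b t - b t)) : b = Ψ a :=
    (hΥo.const_sub a).eq_causalFixedPoint (funext fun t => (hb t).symm)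
  have hright (a : Signal d) : Υ (Ψ a) = a := funext fun t => eq_sub_sub_self_iff.mp (hfix a t)
  have hleft (b : Signal d) : Ψ (Υ b) = b :=
    (hunique _ b fun t => eq_sub_sub_self_iff.mpr rfl).symm
  refine ⟨Ψ, hright, hleft, fun Ψ' ⟨_, hleft'⟩ => funext fun a => ?_,
    hΥo.causal_causalFixedPoint_const_sub, fun a => ⟨hfix a, hunique a⟩⟩
  rw [← hleft' (Ψ a), hright]

/-- If `Υ` is causal and `Υ° := Υ − I` is strictly causal, then `Υ` has a unique two-sided
inverse `Ψ`; moreover `Ψ` is causal and for every `a`, `b := Ψ(a)` is the unique signal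
satisfying `b_t = a_t − Υ°(b)_t` for all `t`. -/
theorem exists_unique_causal_inverse {d : ℕ} (Υ : Signal d → Signal d)
    (hΥ : Causal Υ) (hΥo : StrictlyCausal (fun x => Υ x - x)) :
    ∃ Ψ : Signal d → Signal d,
      (∀ a, Υ (Ψ a) = a) ∧ (∀ b, Ψ (Υ b) = b) ∧
      (∀ Ψ' : Signal d → Signal d,
        ((∀ a, Υ (Ψ' a) = a) ∧ (∀ b, Ψ' (Υ b) = b)) → Ψ' = Ψ) ∧
      Causal Ψ ∧
      (∀ a : Signal d,
        (∀ t, Ψ a t = a t - (Υ (Ψ a) t - Ψ a t)) ∧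
        (∀ b : Signal d, (∀ t, b t = a t - (Υ b t - b t)) → b = Ψ a)) :=
  exists_unique_causal_inverse_general Υ hΥo
end

section
/- Fix a real number p with 1 ≤ p < ∞. Let K be a causal operator mapping ℝ^{d_y}-valued signals to ℝ^{d_u}-valued signals that is incrementally L_p-stable with gain γ ≥ 0, and let Ŝ be a strictly causal L_p-stable operator mapping ℝ^{d_u}-valued signals to ℝ^{d_y}-valued signals. Suppose r, ω are ℝ^{d_u}-valued signals with r ∈ ℓ_p and ω ∈ ℓ_p, v is an ℝ^{d_y}-valued signal with v ∈ ℓ_p, and ω satisfies the fixed-point equation ω = r + K(Ŝ(ω) + v) − K(Ŝ(ω)). Then ‖ω‖_p ≤ ‖r‖_p + γ‖v‖_p. -/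
/-- A signal belongs to `ℓ_p` if `∑ₜ ‖x t‖ ^ p < ∞`. -/
def MemLp (p : ℝ) {d : ℕ} (x : Signal d) : Prop :=
  Summable fun t => ‖x t‖ ^ p

/-- The `ℓ_p`-norm of a signal: `(∑ₜ ‖x t‖ ^ p) ^ (1/p)`. -/
noncomputable def lpNorm (p : ℝ) {d : ℕ} (x : Signal d) : ℝ :=
  (∑' t, ‖x t‖ ^ p) ^ (1 / p)

/-- An operator is `L_p`-stable if it maps `ℓ_p` signals to `ℓ_p` signals. -/
def LpStable (p : ℝ) {d₁ d₂ : ℕ} (Υ : Signal d₁ → Signal d₂) : Prop :=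
  ∀ x : Signal d₁, MemLp p x → MemLp p (Υ x)

/-- An operator is incrementally `L_p`-stable with gain `γ` if
`‖Υ(x₁) − Υ(x₂)‖_p ≤ γ ‖x₁ − x₂‖_p` for all `x₁, x₂ ∈ ℓ_p`. -/
def IncLpStable (p : ℝ) (γ : ℝ) {d₁ d₂ : ℕ} (Υ : Signal d₁ → Signal d₂) : Prop :=
  ∀ x₁ x₂ : Signal d₁, MemLp p x₁ → MemLp p x₂ →
    lpNorm p (Υ x₁ - Υ x₂) ≤ γ * lpNorm p (x₁ - x₂)

section

variable {d : ℕ} {p : ℝ}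

lemma memLp_iff_memℓp (hp : 0 < p) (x : Signal d) :
    MemLp p x ↔ Memℓp x (ENNReal.ofReal p) := by
  rw [memℓp_gen_iff (by rwa [ENNReal.toReal_ofReal hp.le]), ENNReal.toReal_ofReal hp.le]
  rfl

lemma MemLp.add (hp : 0 < p) {x y : Signal d} (hx : MemLp p x) (hy : MemLp p y) :
    MemLp p (x + y) :=
  (memLp_iff_memℓp hp _).2 (((memLp_iff_memℓp hp x).1 hx).add ((memLp_iff_memℓp hp y).1 hy))

lemma MemLp.sub (hp : 0 < p) {x y : Signal d} (hx : MemLp p x) (hy : MemLp p y) :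
    MemLp p (x - y) :=
  (memLp_iff_memℓp hp _).2 (((memLp_iff_memℓp hp x).1 hx).sub ((memLp_iff_memℓp hp y).1 hy))

lemma lpNorm_coe_eq_norm (hp : 0 < p)
    (x : lp (fun _ : ℕ => EuclideanSpace ℝ (Fin d)) (ENNReal.ofReal p)) :
    lpNorm p ⇑x = ‖x‖ := by
  rw [lp.norm_eq_tsum_rpow (by rwa [ENNReal.toReal_ofReal hp.le]), ENNReal.toReal_ofReal hp.le]
  rfl

lemma lpNorm_add_le (hp : 1 ≤ p) {x y : Signal d} (hx : MemLp p x) (hy : MemLp p y) :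
    lpNorm p (x + y) ≤ lpNorm p x + lpNorm p y := by
  have hp0 : 0 < p := by linarith
  have : Fact (1 ≤ ENNReal.ofReal p) := ⟨ENNReal.one_le_ofReal.2 hp⟩
  let X : lp (fun _ : ℕ => EuclideanSpace ℝ (Fin d)) (ENNReal.ofReal p) :=
    ⟨x, (memLp_iff_memℓp hp0 x).1 hx⟩
  let Y : lp (fun _ : ℕ => EuclideanSpace ℝ (Fin d)) (ENNReal.ofReal p) :=
    ⟨y, (memLp_iff_memℓp hp0 y).1 hy⟩
  calc lpNorm p (x + y) = ‖X + Y‖ := lpNorm_coe_eq_norm hp0 (X + Y)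
    _ ≤ ‖X‖ + ‖Y‖ := norm_add_le X Y
    _ = lpNorm p x + lpNorm p y := by
      rw [← lpNorm_coe_eq_norm hp0 X, ← lpNorm_coe_eq_norm hp0 Y]

end

theorem ici_loop_signal_bound_general {du dy : ℕ} (p : ℝ) (hp : 1 ≤ p)
    (K : Signal dy → Signal du) (γ : ℝ)
    (hKinc : IncLpStable p γ K)
    (Shat : Signal du → Signal dy)
    (hSlp : LpStable p Shat)
    (r ω : Signal du) (v : Signal dy)
    (hr : MemLp p r) (hω : MemLp p ω) (hv : MemLp p v)
    (hfix : ω = r + (K (Shat ω + v) - K (Shat ω))) :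
    lpNorm p ω ≤ lpNorm p r + γ * lpNorm p v := by
  have hp0 : 0 < p := by linarith
  have hS : MemLp p (Shat ω) := hSlp ω hω
  have hdiff : MemLp p (K (Shat ω + v) - K (Shat ω)) := by
    rw [eq_sub_of_add_eq' hfix.symm]
    exact hω.sub hp0 hr
  have hgain : lpNorm p (K (Shat ω + v) - K (Shat ω)) ≤ γ * lpNorm p v := by
    simpa using hKinc _ _ (hS.add hp0 hv) hS
  calc lpNorm p ω = lpNorm p (r + (K (Shat ω + v) - K (Shat ω))) := congrArg (lpNorm p) hfix
    _ ≤ lpNorm p r + lpNorm p (K (Shat ω + v) - K (Shat ω)) := lpNorm_add_le hp hr hdiff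
    _ ≤ lpNorm p r + γ * lpNorm p v := by gcongr

/-- If `K` is causal and incrementally `L_p`-stable with gain `γ ≥ 0`, `Ŝ` (written `Shat`)
is strictly causal and `L_p`-stable, and `ω ∈ ℓ_p` satisfies the fixed-point equation
`ω = r + K(Ŝ(ω) + v) − K(Ŝ(ω))` with `r, v ∈ ℓ_p`, then `‖ω‖_p ≤ ‖r‖_p + γ‖v‖_p`. -/
theorem ici_loop_signal_bound {du dy : ℕ} (p : ℝ) (hp : 1 ≤ p)
    (K : Signal dy → Signal du) (γ : ℝ) (hγ : 0 ≤ γ)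
    (hKc : Causal K) (hKinc : IncLpStable p γ K)
    (Shat : Signal du → Signal dy)
    (hSsc : StrictlyCausal Shat) (hSlp : LpStable p Shat)
    (r ω : Signal du) (v : Signal dy)
    (hr : MemLp p r) (hω : MemLp p ω) (hv : MemLp p v)
    (hfix : ω = r + (K (Shat ω + v) - K (Shat ω))) :
    lpNorm p ω ≤ lpNorm p r + γ * lpNorm p v :=
  ici_loop_signal_bound_general p hp K γ hKinc Shat hSlp r ω v hr hω hv hfix
end

section
/- Let S be a strictly causal operator mapping ℝ^{d_u}-valued signals to ℝ^{d_y}-valued signals and K a causal operator mapping ℝ^{d_y}-valued signals to ℝ^{d_u}-valued signals. Then: (i) the composition K∘S is strictly causal; (ii) the operator I − K∘S (on ℝ^{d_u}-valued signals, I the identity) admits a unique two-sided inverse (I − K∘S)^{-1}, which is causal; and (iii) the operator Ŝ := S ∘ (I − K∘S)^{-1} is strictly causal. -/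
/-!
Write `F := K ∘ S`; it is strictly causal, so the equation `u = a + F u` determines `u t` from
`a t` and `u` on times `< t`. Strong recursion on `t` therefore produces a solution, and strong
induction shows it is unique and that `u t` depends only on `a` up to time `t`. The map `a ↦ u`
is then the two-sided inverse of `I - F`, it is causal, and `S` after a causal map stays
strictly causal.
-/

lemma Causal.comp_strictlyCausal {d₁ d₂ d₃ : ℕ} {K : Signal d₂ → Signal d₃}
    {S : Signal d₁ → Signal d₂} (hK : Causal K) (hS : StrictlyCausal S) :
    StrictlyCausal (fun u => K (S u)) :=
  fun _ _ t hxz => hK _ _ t fun s hs => hS _ _ s fun r hr => hxz r (hr.trans_le hs)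

lemma StrictlyCausal.comp_causal {d₁ d₂ d₃ : ℕ} {S : Signal d₂ → Signal d₃}
    {Ψ : Signal d₁ → Signal d₂} (hS : StrictlyCausal S) (hΨ : Causal Ψ) :
    StrictlyCausal (fun u => S (Ψ u)) :=
  fun _ _ t hxz => hS _ _ t fun s hs => hΨ _ _ s fun r hr => hxz r (hr.trans_lt hs)

/-- The value at `t` feeds `F` only the values at times `< t` (zero afterwards), which for
strictly causal `F` does not change `F · t`. -/
noncomputable def feedbackSolution {d : ℕ} (F : Signal d → Signal d) (a : Signal d) : Signal d
  | t => a t + F (fun s => if s < t then feedbackSolution F a s else 0) t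

namespace StrictlyCausal

variable {d : ℕ} {F : Signal d → Signal d}

lemma feedbackSolution_eq (hF : StrictlyCausal F) (a : Signal d) :
    feedbackSolution F a = a + F (feedbackSolution F a) := by
  funext t
  rw [feedbackSolution]
  congr 1
  exact hF _ _ t fun s hs => if_pos hs

lemma apply_eq_of_eq_add_self {u v a b : Signal d} (hF : StrictlyCausal F)
    (hu : u = a + F u) (hv : v = b + F v) {t : ℕ} (hab : ∀ s ≤ t, a s = b s) : u t = v t := by
  induction t using Nat.strong_induction_on with
  | _ t ih =>
    rw [hu, hv, Pi.add_apply, Pi.add_apply, hab t le_rfl]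
    congr 1
    exact hF _ _ t fun s hs => ih s hs fun r hr => hab r (hr.trans hs.le)

lemma eq_of_eq_add_self {u v a : Signal d} (hF : StrictlyCausal F)
    (hu : u = a + F u) (hv : v = a + F v) : u = v :=
  funext fun _ => hF.apply_eq_of_eq_add_self hu hv fun _ _ => rfl

lemma causal_feedbackSolution (hF : StrictlyCausal F) : Causal (feedbackSolution F) :=
  fun _ _ _ hxz =>
    hF.apply_eq_of_eq_add_self (hF.feedbackSolution_eq _) (hF.feedbackSolution_eq _) hxz

lemma feedbackSolution_sub_self (hF : StrictlyCausal F) (a : Signal d) :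
    feedbackSolution F a - F (feedbackSolution F a) = a :=
  sub_eq_iff_eq_add.2 (hF.feedbackSolution_eq a)

lemma feedbackSolution_sub (hF : StrictlyCausal F) (b : Signal d) :
    feedbackSolution F (b - F b) = b :=
  hF.eq_of_eq_add_self (hF.feedbackSolution_eq _) (sub_add_cancel b (F b)).symm

lemma eq_feedbackSolution_of_sub_self {Ψ : Signal d → Signal d} (hF : StrictlyCausal F)
    (hΨ : ∀ a, Ψ a - F (Ψ a) = a) : Ψ = feedbackSolution F :=
  funext fun a => hF.eq_of_eq_add_self (sub_eq_iff_eq_add.1 (hΨ a)) (hF.feedbackSolution_eq a)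

end StrictlyCausal

/-- For strictly causal `S` and causal `K`: (i) `K ∘ S` is strictly causal; (ii) the operator
`I − K∘S` admits a unique two-sided inverse, which is causal; (iii) `Ŝ := S ∘ (I − K∘S)⁻¹`
is strictly causal. -/
theorem kComp_inverse_strictlyCausal {du dy : ℕ}
    (S : Signal du → Signal dy) (K : Signal dy → Signal du)
    (hS : StrictlyCausal S) (hK : Causal K) :
    StrictlyCausal (fun u : Signal du => K (S u)) ∧
    ∃ Ψ : Signal du → Signal du,
      (∀ a : Signal du, Ψ a - K (S (Ψ a)) = a) ∧
      (∀ b : Signal du, Ψ (b - K (S b)) = b) ∧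
      (∀ Ψ' : Signal du → Signal du,
        ((∀ a, Ψ' a - K (S (Ψ' a)) = a) ∧ (∀ b, Ψ' (b - K (S b)) = b)) → Ψ' = Ψ) ∧
      Causal Ψ ∧
      StrictlyCausal (fun u : Signal du => S (Ψ u)) := by
  have hF := hK.comp_strictlyCausal hS
  have hΨ := hF.causal_feedbackSolution
  exact ⟨hF, feedbackSolution _, hF.feedbackSolution_sub_self, hF.feedbackSolution_sub,
    fun _ h => hF.eq_feedbackSolution_of_sub_self h.1, hΨ, hS.comp_causal hΨ⟩
end

section
/- Let S be a strictly causal operator mapping ℝ^{d_u}-valued signals to ℝ^{d_y}-valued signals and K a causal operator mapping ℝ^{d_y}-valued signals to ℝ^{d_u}-valued signals, and define Ŝ := S ∘ (I − K∘S)^{-1}, where (I − K∘S)^{-1} is the causal two-sided inverse of I − K∘S. Then for every ℝ^{d_u}-valued signal û, the unique signal ŷ° satisfying the ICI interconnection equation ŷ° = Ŝ(û − K(ŷ°)) equals S(û); that is, the ICI model built from Ŝ and K coincides with S as an operator. -/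
theorem eq_apply_inv_sub_feedback_iff {G Y : Type*} [AddGroup G]
    (S : G → Y) (K : Y → G) (Ψ : G → G)
    (hΨr : ∀ a, Ψ a - K (S (Ψ a)) = a) (hΨl : ∀ b, Ψ (b - K (S b)) = b) (u : G) (y : Y) :
    y = S (Ψ (u - K y)) ↔ y = S u := by
  constructor
  · intro hy
    -- `b := Ψ (u - K y)` solves `b - K (S b) = u - K y`, and `S b = y` turns this into `b = u`.
    have hb : Ψ (u - K y) - K y = u - K y := by
      simpa only [← hy] using hΨr (u - K y)
    rw [hy, sub_left_injective hb]
  · rintro rfl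
    rw [hΨl]

theorem ici_model_recovers_S_general {du dy : ℕ}
    (S : Signal du → Signal dy) (K : Signal dy → Signal du)
    (Ψ : Signal du → Signal du)
    (hΨr : ∀ a : Signal du, Ψ a - K (S (Ψ a)) = a)
    (hΨl : ∀ b : Signal du, Ψ (b - K (S b)) = b)
    (Shat : Signal du → Signal dy) (hShat : ∀ u, Shat u = S (Ψ u)) :
    ∀ (uhat : Signal du) (ycirc : Signal dy),
      ycirc = Shat (uhat - K ycirc) ↔ ycirc = S uhat := by
  intro uhat ycirc
  rw [hShat]
  exact eq_apply_inv_sub_feedback_iff S K Ψ hΨr hΨl uhat ycirc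

/-- Let `Ψ` be the causal two-sided inverse of `I − K∘S` and `Ŝ := S ∘ Ψ` (written `Shat`).
Then for every input `û`, a signal `ŷ°` satisfies the ICI equation `ŷ° = Ŝ(û − K(ŷ°))`
if and only if `ŷ° = S(û)`; that is, the ICI model built from `Ŝ` and `K` coincides
with `S`. -/
theorem ici_model_recovers_S {du dy : ℕ}
    (S : Signal du → Signal dy) (K : Signal dy → Signal du)
    (hS : StrictlyCausal S) (hK : Causal K)
    (Ψ : Signal du → Signal du) (hΨc : Causal Ψ)
    (hΨr : ∀ a : Signal du, Ψ a - K (S (Ψ a)) = a)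
    (hΨl : ∀ b : Signal du, Ψ (b - K (S b)) = b)
    (Shat : Signal du → Signal dy) (hShat : ∀ u, Shat u = S (Ψ u)) :
    ∀ (uhat : Signal du) (ycirc : Signal dy),
      ycirc = Shat (uhat - K ycirc) ↔ ycirc = S uhat :=
  ici_model_recovers_S_general S K Ψ hΨr hΨl Shat hShat
end

section
/- (Theorem 1, part T.2) Fix a real number p with 1 ≤ p < ∞. Let K be a causal, L_p-stable operator mapping ℝ^{d_y}-valued signals to ℝ^{d_u}-valued signals that is incrementally L_p-stable, and let G be a strictly causal operator mapping ℝ^{d_u}-valued signals to ℝ^{d_y}-valued signals such that the closed loop of G and K is L_p-stable: for every r ∈ ℓ_p (ℝ^{d_u}-valued) and v ∈ ℓ_p (ℝ^{d_y}-valued), the unique signals u, y satisfying y = G(u) + v and u = r + K(y) belong to ℓ_p. Then there exists a strictly causal, L_p-stable operator Ŝ mapping ℝ^{d_u}-valued signals to ℝ^{d_y}-valued signals such that for every signal û, the unique ŷ° satisfying ŷ° = Ŝ(û − K(ŷ°)) equals G(û). -/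
/-!
Given the internal controller `K`, take `Ŝ(w) := G(u)` where `u` is the closed-loop input
`u = w + K(G u)`, i.e. the solution of the loop of `G` and `K` driven by `r = w`, `v = 0`.
Since `G` is strictly causal and `K` causal, `u` is built time step by time step and depends
causally on `w`, so `Ŝ` is strictly causal; closed-loop stability makes `Ŝ` `L_p`-stable.
The ICI equation `ŷ° = Ŝ(û − K ŷ°)` says precisely that `û` is the closed-loop input for
`w = û − K ŷ°`, which by uniqueness of that input is equivalent to `ŷ° = G û`.
-/

section ClosedLoop

variable {du dy : ℕ} {K : Signal dy → Signal du} {G : Signal du → Signal dy}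

-- Only values at times `s < t` are read, which makes the recursion well founded; by strict
-- causality of `G` the truncation does not change `K (G u) t` (`closedLoopInput_eq`).
variable (K G) in
noncomputable def closedLoopInput (w : Signal du) : Signal du
  | t => w t + K (G (fun s => if s < t then closedLoopInput w s else 0)) t

theorem closedLoopInput_eq (hKc : Causal K) (hG : StrictlyCausal G) (w : Signal du) :
    closedLoopInput K G w = w + K (G (closedLoopInput K G w)) := by
  funext t
  rw [closedLoopInput]
  congr 1
  refine hKc _ _ t fun s hs => hG _ _ s fun s' hs' => ?_
  rw [if_pos (hs'.trans_le hs)]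

theorem closedLoop_apply_eq_of_eqOn (hKc : Causal K) (hG : StrictlyCausal G)
    {w w' u u' : Signal du} (hu : u = w + K (G u)) (hu' : u' = w' + K (G u')) (t : ℕ)
    (hw : ∀ s ≤ t, w s = w' s) : u t = u' t := by
  induction t using Nat.strong_induction_on with
  | _ t ih =>
    rw [hu, hu', Pi.add_apply, Pi.add_apply, hw t le_rfl]
    congr 1
    refine hKc _ _ t fun s hs => hG _ _ s fun s' hs' => ?_
    exact ih s' (hs'.trans_le hs) fun r hr => hw r (hr.trans (hs'.le.trans hs))

theorem eq_closedLoopInput (hKc : Causal K) (hG : StrictlyCausal G) {w u : Signal du}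
    (hu : u = w + K (G u)) : u = closedLoopInput K G w :=
  funext fun t =>
    closedLoop_apply_eq_of_eqOn hKc hG hu (closedLoopInput_eq hKc hG w) t fun _ _ => rfl

variable (K G) in
noncomputable def iciModel (w : Signal du) : Signal dy :=
  G (closedLoopInput K G w)

theorem iciModel_strictlyCausal (hKc : Causal K) (hG : StrictlyCausal G) :
    StrictlyCausal (iciModel K G) := fun x z t hxz =>
  hG _ _ t fun s hs =>
    closedLoop_apply_eq_of_eqOn hKc hG (closedLoopInput_eq hKc hG x)
      (closedLoopInput_eq hKc hG z) s fun r hr => hxz r (hr.trans_lt hs)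

theorem memLp_zero {p : ℝ} {d : ℕ} (hp : p ≠ 0) : MemLp p (0 : Signal d) := by
  simp [MemLp, Real.zero_rpow hp]

theorem iciModel_lpStable {p : ℝ} (hp : p ≠ 0) (hKc : Causal K) (hG : StrictlyCausal G)
    (hCL : ∀ (r : Signal du) (v : Signal dy), MemLp p r → MemLp p v →
      ∀ (u : Signal du) (y : Signal dy), y = G u + v → u = r + K y → MemLp p u ∧ MemLp p y) :
    LpStable p (iciModel K G) := fun w hw =>
  (hCL w 0 hw (memLp_zero hp) _ _ (add_zero _).symm (closedLoopInput_eq hKc hG w)).2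

theorem iciModel_eq_iff (hKc : Causal K) (hG : StrictlyCausal G) (uhat : Signal du)
    (ycirc : Signal dy) : ycirc = iciModel K G (uhat - K ycirc) ↔ ycirc = G uhat := by
  set u := closedLoopInput K G (uhat - K ycirc)
  have hu : u = uhat - K ycirc + K (G u) := closedLoopInput_eq hKc hG _
  constructor
  · intro h
    have hu_eq : u = uhat := by rwa [← show G u = ycirc from h.symm, sub_add_cancel] at hu
    rwa [← hu_eq]
  · intro h
    have huhat : uhat = uhat - K ycirc + K (G uhat) := by rw [← h, sub_add_cancel]
    rw [iciModel, ← eq_closedLoopInput hKc hG huhat, h]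

end ClosedLoop

theorem exists_ici_representation_general {du dy : ℕ} (p : ℝ) (hp : 1 ≤ p)
    (K : Signal dy → Signal du)
    (hKc : Causal K)
    (G : Signal du → Signal dy) (hG : StrictlyCausal G)
    (hCL : ∀ (r : Signal du) (v : Signal dy), MemLp p r → MemLp p v →
      ∀ (u : Signal du) (y : Signal dy),
        y = G u + v → u = r + K y → MemLp p u ∧ MemLp p y) :
    ∃ Shat : Signal du → Signal dy,
      StrictlyCausal Shat ∧ LpStable p Shat ∧
      ∀ (uhat : Signal du) (ycirc : Signal dy),
        ycirc = Shat (uhat - K ycirc) ↔ ycirc = G uhat :=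
  ⟨iciModel K G, iciModel_strictlyCausal hKc hG,
    iciModel_lpStable (zero_lt_one.trans_le hp).ne' hKc hG hCL, iciModel_eq_iff hKc hG⟩

/-- **Theorem 1, part T.2.** If `K` is causal, `L_p`-stable, and incrementally `L_p`-stable,
and `G` is strictly causal with the closed loop of `G` and `K` being `L_p`-stable, then
there exists a strictly causal, `L_p`-stable operator `Ŝ` (written `Shat`) whose ICI model
with internal controller `K` coincides with `G`: for every `û`, the unique `ŷ°` with
`ŷ° = Ŝ(û − K(ŷ°))` equals `G(û)`. -/
theorem exists_ici_representation {du dy : ℕ} (p : ℝ) (hp : 1 ≤ p)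
    (K : Signal dy → Signal du)
    (hKc : Causal K) (hKlp : LpStable p K)
    (hKinc : ∃ γ : ℝ, 0 ≤ γ ∧ IncLpStable p γ K)
    (G : Signal du → Signal dy) (hG : StrictlyCausal G)
    (hCL : ∀ (r : Signal du) (v : Signal dy), MemLp p r → MemLp p v →
      ∀ (u : Signal du) (y : Signal dy),
        y = G u + v → u = r + K y → MemLp p u ∧ MemLp p y) :
    ∃ Shat : Signal du → Signal dy,
      StrictlyCausal Shat ∧ LpStable p Shat ∧
      ∀ (uhat : Signal du) (ycirc : Signal dy),
        ycirc = Shat (uhat - K ycirc) ↔ ycirc = G uhat :=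
  exists_ici_representation_general p hp K hKc G hG hCL
end

section
/- Let Ŝ be a strictly causal, additive operator mapping ℝ^{d_u}-valued signals to ℝ^{d_y}-valued signals and K a causal, additive operator mapping ℝ^{d_y}-valued signals to ℝ^{d_u}-valued signals (additive meaning Υ(a + b) = Υ(a) + Υ(b) for all signals a, b, with addition of signals defined pointwise). For any ℝ^{d_u}-valued signal r and ℝ^{d_y}-valued signal v, if ŷ is a signal satisfying the noisy closed-loop equation ŷ = Ŝ(r + K(ŷ) − K(ŷ − v)) + v, then ŷ = Ŝ(r) + Ŝ(K(v)) + v. In particular, in the linear case the noisy closed-loop output of the ICI model equals Ŝ applied to the noise-independent excitation signal r plus an additive noise term Ŝ(K(v)) + v. -/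
/-- An operator is additive if `Υ(a + b) = Υ(a) + Υ(b)` for all signals `a`, `b`. -/
def AdditiveOp {d₁ d₂ : ℕ} (Υ : Signal d₁ → Signal d₂) : Prop :=
  ∀ a b : Signal d₁, Υ (a + b) = Υ a + Υ b

theorem AdditiveOp.sub_map_sub {d₁ d₂ : ℕ} {Υ : Signal d₁ → Signal d₂} (hΥ : AdditiveOp Υ)
    (a b : Signal d₁) : Υ a - Υ (a - b) = Υ b :=
  ((AddMonoidHom.mk' Υ hΥ).map_sub a (a - b)).symm.trans (congrArg Υ (sub_sub_cancel a b))

theorem ici_additive_noise_separation_general {du dy : ℕ}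
    (Shat : Signal du → Signal dy) (K : Signal dy → Signal du)
    (hSadd : AdditiveOp Shat)
    (hKadd : AdditiveOp K)
    (r : Signal du) (v : Signal dy) (yhat : Signal dy)
    (h : yhat = Shat (r + K yhat - K (yhat - v)) + v) :
    yhat = Shat r + Shat (K v) + v := by
  rw [h, add_sub_assoc, hKadd.sub_map_sub, hSadd]

/-- In the additive (linear) case, the noisy closed-loop output of the ICI model equals
`Ŝ` applied to the noise-independent excitation `r`, plus the additive noise term
`Ŝ(K(v)) + v`: if `ŷ = Ŝ(r + K(ŷ) − K(ŷ − v)) + v`, then `ŷ = Ŝ(r) + Ŝ(K(v)) + v`. -/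
theorem ici_additive_noise_separation {du dy : ℕ}
    (Shat : Signal du → Signal dy) (K : Signal dy → Signal du)
    (hSsc : StrictlyCausal Shat) (hSadd : AdditiveOp Shat)
    (hKc : Causal K) (hKadd : AdditiveOp K)
    (r : Signal du) (v : Signal dy) (yhat : Signal dy)
    (h : yhat = Shat (r + K yhat - K (yhat - v)) + v) :
    yhat = Shat r + Shat (K v) + v :=
  ici_additive_noise_separation_general Shat K hSadd hKadd r v yhat h
end
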